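/- Let q be an even power of an odd prime with √q ≡ 1 (mod 4), and let w ∈ F_q be a nonsquare. Let O be the set of points of PG(2,q) of the form (a² + wc² : cw : w), where a, c range over F_q with a^{√q+1} = 1. Then every point of O is internal to the conic C : X₂² − X₁X₃ = 0, and no two points of O (equal or distinct) are conjugate; in particular O is an independent set of internal points in the Erdős–Rényi graph ER_q. -/

import Mathlib

/-!
The points of `O` have representatives `(a² + wc², cw, w)` with `a` in the norm-one subgroup
`U = {a : a^(s+1) = 1}` of `F_q^*`, `q = s²`. For such representatives the discriminant
`p₂² - p₁p₃` is `-a²w`, and the conjugacy form of two of them is `w (a² + b² + w (c - d)²)`.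
Since `q ≡ 1 (mod 4)`, `-1` is a square, so the first is a nonsquare, and the second can only
vanish if `a² + b²` is zero or a nonsquare. Neither happens for `a, b ∈ U`: with `u = a/b ∈ U`,
the element `z = u + u⁻¹` is fixed by the Frobenius `x ↦ x^s`, and `(a² + b²)^(s+1) = z²` is the
square of an element of `F_s`, which makes `a² + b²` a square in `F_q`; and `a² + b² = 0` would
make `u` a square root of `-1` in `U`, impossible because `(s+1)/2` is odd.
-/

open Projectivization

/-- Two points of `PG(2,q)` are conjugate with respect to the orthogonal polarity of the
conic `X₂² - X₁X₃ = 0` if the bilinear form `p₃q₁ - 2p₂q₂ + p₁q₃` vanishes (this is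
independent of the chosen representatives). -/
def ConjOdd {F : Type} [Field F] (P Q : Projectivization F (Fin 3 → F)) : Prop :=
  P.rep 2 * Q.rep 0 - 2 * P.rep 1 * Q.rep 1 + P.rep 0 * Q.rep 2 = 0

/-- The Erdős–Rényi polarity graph `ER_q`. -/
def ER (F : Type) [Field F] : SimpleGraph (Projectivization F (Fin 3 → F)) where
  Adj P Q := P ≠ Q ∧ ConjOdd P Q
  symm := ⟨by
    rintro P Q ⟨h1, h2⟩
    exact ⟨h1.symm, by unfold ConjOdd at *; linear_combination h2⟩⟩
  loopless := ⟨fun P h => h.1 rfl⟩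

/-- A point `P` of `PG(2,q)` is internal to the conic `C : X₂² - X₁X₃ = 0` if
`p₂² - p₁p₃` is a nonsquare of `F_q`. -/
def IsInternal {F : Type} [Field F] (P : Projectivization F (Fin 3 → F)) : Prop :=
  ¬ IsSquare (P.rep 1 ^ 2 - P.rep 0 * P.rep 2)

/-- The `K`-orbit `O`: points of the form `(a² + wc² : cw : w)` with `a, c ∈ F_q` and
`a^{√q+1} = 1`. -/
def Oset (F : Type) [Field F] (s : ℕ) (w : F) : Set (Projectivization F (Fin 3 → F)) :=
  {P | ∃ a c : F, a ^ (s + 1) = 1 ∧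
    ∃ hx : (![a ^ 2 + w * c ^ 2, c * w, w] : Fin 3 → F) ≠ 0,
      P = Projectivization.mk F _ hx}

section NonSquares

variable {F : Type*} [Field F]

lemma not_isSquare_mul_of_isSquare {a b : F} (ha : IsSquare a) (ha0 : a ≠ 0)
    (hb : ¬IsSquare b) : ¬IsSquare (a * b) := by
  rintro ⟨t, ht⟩
  obtain ⟨r, rfl⟩ := ha
  have hr : r ≠ 0 := by rintro rfl; simp at ha0
  exact hb ⟨t / r, by field_simp; linear_combination ht⟩

lemma add_mul_sq_ne_zero {x w : F} (hneg : IsSquare (-1 : F)) (hx : IsSquare x) (hx0 : x ≠ 0)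
    (hw : ¬IsSquare w) (y : F) : x + w * y ^ 2 ≠ 0 := by
  intro h
  have hy : y ≠ 0 := by rintro rfl; exact hx0 (by simpa using h)
  apply not_isSquare_mul_of_isSquare (hneg.mul (.sq y)) (by simpa using hy) hw
  rwa [show -1 * y ^ 2 * w = x by linear_combination -h]

end NonSquares

section NormOne

variable {F : Type*} [Field F] {s : ℕ}

lemma ne_zero_of_pow_succ_eq_one {a : F} (ha : a ^ (s + 1) = 1) : a ≠ 0 := by
  rintro rfl
  simp at ha

lemma pow_eq_inv_of_pow_succ_eq_one {a : F} (ha : a ^ (s + 1) = 1) : a ^ s = a⁻¹ :=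
  eq_inv_of_mul_eq_one_left (by rwa [← pow_succ])

lemma sq_add_sq_ne_zero_of_pow_succ_eq_one (h2 : (2 : F) ≠ 0) (hs : s % 4 = 1) {a b : F}
    (ha : a ^ (s + 1) = 1) (hb : b ^ (s + 1) = 1) : a ^ 2 + b ^ 2 ≠ 0 := by
  intro hab
  have hb0 := ne_zero_of_pow_succ_eq_one hb
  have hu2 : (a / b) ^ 2 = -1 := by field_simp; linear_combination hab
  have hu : (a / b) ^ (s + 1) = 1 := by rw [div_pow, ha, hb, div_one]
  obtain ⟨t, rfl⟩ : ∃ t, s = 4 * t + 1 := ⟨s / 4, by omega⟩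
  rw [show 4 * t + 1 + 1 = 2 * (2 * t + 1) by ring, pow_mul, hu2,
    Odd.neg_one_pow ⟨t, rfl⟩] at hu
  exact h2 (by linear_combination -hu)

variable {p k : ℕ} [ExpChar F p]

lemma exists_fixed_sq_eq_pow_succ_sq_add_sq (hs : s = p ^ k) {a b : F} (ha : a ^ (s + 1) = 1)
    (hb : b ^ (s + 1) = 1) : ∃ z : F, z ^ s = z ∧ (a ^ 2 + b ^ 2) ^ (s + 1) = z ^ 2 := by
  have ha0 := ne_zero_of_pow_succ_eq_one ha
  have hb0 := ne_zero_of_pow_succ_eq_one hb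
  set u := a / b
  have hu : u ^ s = u⁻¹ := pow_eq_inv_of_pow_succ_eq_one (by rw [div_pow, ha, hb, div_one])
  have hz : (u + u⁻¹) ^ s = u + u⁻¹ := by
    rw [hs, add_pow_expChar_pow, ← hs, inv_pow, hu, inv_inv, add_comm]
  have hab : a ^ 2 + b ^ 2 = a * b * (u + u⁻¹) := by simp only [u]; field_simp
  refine ⟨u + u⁻¹, hz, ?_⟩
  rw [hab, mul_pow, mul_pow, ha, hb, pow_succ, hz]
  ring

end NormOne

section FiniteField

variable {F : Type} [Field F] [Fintype F] {s : ℕ}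

lemma ringChar_ne_two_of_card_eq_sq (hF : Fintype.card F = s ^ 2) (hodd : Odd s) :
    ringChar F ≠ 2 := by
  rw [Ne, FiniteField.even_card_iff_char_two, hF, Nat.odd_iff.mp hodd.pow]
  simp

lemma isSquare_neg_one_of_card_eq_sq (hF : Fintype.card F = s ^ 2) (hodd : Odd s) :
    IsSquare (-1 : F) := by
  rw [FiniteField.isSquare_neg_one_iff, hF]
  obtain ⟨t, rfl⟩ := hodd
  ring_nf
  omega

/-- Euler's criterion: `x^((q-1)/2) = (x^(s+1))^((s-1)/2) = z^(s-1) = 1`. -/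
lemma isSquare_of_pow_succ_eq_sq (hF : Fintype.card F = s ^ 2) (hodd : Odd s) {x z : F}
    (hz : z ^ s = z) (hx : x ^ (s + 1) = z ^ 2) : IsSquare x := by
  rcases eq_or_ne x 0 with rfl | hx0
  · exact .zero
  have hz0 : z ≠ 0 := by rintro rfl; simp [hx0] at hx
  rw [FiniteField.isSquare_iff (ringChar_ne_two_of_card_eq_sq hF hodd) hx0, hF]
  obtain ⟨t, rfl⟩ := hodd
  have hzt : z ^ (2 * t) = 1 := by
    apply mul_right_cancel₀ hz0
    rw [← pow_succ, hz, one_mul]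
  have hdiv : (2 * t + 1) ^ 2 / 2 = (2 * t + 1 + 1) * t := by
    rw [show (2 * t + 1) ^ 2 = 2 * ((2 * t + 1 + 1) * t) + 1 by ring]
    omega
  rw [hdiv, pow_mul, hx, ← pow_mul, hzt]

end FiniteField

section Oset

variable {F : Type} [Field F] {s : ℕ} {w : F} {P Q : Projectivization F (Fin 3 → F)}

lemma exists_rep_eq_smul_of_mem_Oset (hP : P ∈ Oset F s w) :
    ∃ a c : F, a ^ (s + 1) = 1 ∧
      ∃ u : F, u ≠ 0 ∧ P.rep = u • ![a ^ 2 + w * c ^ 2, c * w, w] := by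
  obtain ⟨a, c, ha, hx, rfl⟩ := hP
  obtain ⟨u, hu⟩ := exists_smul_eq_mk_rep F _ hx
  exact ⟨a, c, ha, u, u.ne_zero, hu.symm⟩

lemma isInternal_of_mem_Oset (hneg : IsSquare (-1 : F)) (hw : ¬IsSquare w)
    (hP : P ∈ Oset F s w) : IsInternal P := by
  obtain ⟨a, c, ha, u, hu, hrep⟩ := exists_rep_eq_smul_of_mem_Oset hP
  have hdisc : P.rep 1 ^ 2 - P.rep 0 * P.rep 2 = -1 * (u * a) ^ 2 * w := by
    simp only [hrep, Pi.smul_apply, smul_eq_mul, Matrix.cons_val, Matrix.cons_val_zero,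
      Matrix.cons_val_one]
    ring
  rw [IsInternal, hdisc]
  exact not_isSquare_mul_of_isSquare (hneg.mul (.sq _))
    (by simp [hu, ne_zero_of_pow_succ_eq_one ha]) hw

lemma not_conjOdd_of_mem_Oset [Fintype F] {p k : ℕ} [ExpChar F p]
    (hF : Fintype.card F = s ^ 2) (hs : s = p ^ k) (hmod : s % 4 = 1) (hw : ¬IsSquare w)
    (hP : P ∈ Oset F s w) (hQ : Q ∈ Oset F s w) : ¬ConjOdd P Q := by
  have hodd : Odd s := Nat.odd_iff.mpr (by omega)
  have h2 : (2 : F) ≠ 0 := Ring.two_ne_zero (ringChar_ne_two_of_card_eq_sq hF hodd)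
  have hw0 : w ≠ 0 := by rintro rfl; exact hw .zero
  obtain ⟨a, c, ha, u, hu, hP⟩ := exists_rep_eq_smul_of_mem_Oset hP
  obtain ⟨b, d, hb, v, hv, hQ⟩ := exists_rep_eq_smul_of_mem_Oset hQ
  have hform : P.rep 2 * Q.rep 0 - 2 * P.rep 1 * Q.rep 1 + P.rep 0 * Q.rep 2 =
      u * v * w * (a ^ 2 + b ^ 2 + w * (c - d) ^ 2) := by
    simp only [hP, hQ, Pi.smul_apply, smul_eq_mul, Matrix.cons_val, Matrix.cons_val_zero,
      Matrix.cons_val_one]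
    ring
  obtain ⟨z, hz, hnorm⟩ := exists_fixed_sq_eq_pow_succ_sq_add_sq hs ha hb
  rw [ConjOdd, hform]
  exact mul_ne_zero (by simp [hu, hv, hw0]) <|
    add_mul_sq_ne_zero (isSquare_neg_one_of_card_eq_sq hF hodd)
      (isSquare_of_pow_succ_eq_sq hF hodd hz hnorm)
      (sq_add_sq_ne_zero_of_pow_succ_eq_one h2 hmod ha hb) hw _

end Oset

theorem Oset_internal_non_conjugate_general
    (p k s : ℕ) (hp : p.Prime) (hs : s = p ^ k)
    (hmod : s % 4 = 1)
    (F : Type) [Field F] [Fintype F] (hF : Fintype.card F = s ^ 2)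
    (w : F) (hw : ¬ IsSquare w) :
    (∀ P ∈ Oset F s w, IsInternal P) ∧
    (∀ P ∈ Oset F s w, ∀ Q ∈ Oset F s w,
      P.rep 2 * Q.rep 0 - 2 * P.rep 1 * Q.rep 1 + P.rep 0 * Q.rep 2 ≠ 0) ∧
    (∀ P ∈ Oset F s w, ∀ Q ∈ Oset F s w, ¬ (ER F).Adj P Q) := by
  have : Fact p.Prime := ⟨hp⟩
  have : CharP F p := charP_of_card_eq_prime_pow (f := k * 2) (by rw [hF, hs, pow_mul])
  have hodd : Odd s := Nat.odd_iff.mpr (by omega)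
  have hconj : ∀ P ∈ Oset F s w, ∀ Q ∈ Oset F s w,
      P.rep 2 * Q.rep 0 - 2 * P.rep 1 * Q.rep 1 + P.rep 0 * Q.rep 2 ≠ 0 :=
    fun P hP Q hQ ↦ not_conjOdd_of_mem_Oset hF hs hmod hw hP hQ
  exact ⟨fun P hP ↦ isInternal_of_mem_Oset (isSquare_neg_one_of_card_eq_sq hF hodd) hw hP,
    hconj, fun P hP Q hQ hadj ↦ hconj P hP Q hQ hadj.2⟩

/-- Let `q = s²` be an even power of an odd prime with `s = √q ≡ 1 (mod 4)` and let
`w ∈ F_q` be a nonsquare. Then every point of `O` is internal to `C : X₂² - X₁X₃ = 0`,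
no two points of `O` (equal or distinct) are conjugate, and in particular `O` is an
independent set of internal points in `ER_q`. -/
theorem Oset_internal_non_conjugate
    (p k s : ℕ) (hp : p.Prime) (hpodd : Odd p) (hk : 0 < k) (hs : s = p ^ k)
    (hmod : s % 4 = 1)
    (F : Type) [Field F] [Fintype F] (hF : Fintype.card F = s ^ 2)
    (w : F) (hw : ¬ IsSquare w) :
    (∀ P ∈ Oset F s w, IsInternal P) ∧
    (∀ P ∈ Oset F s w, ∀ Q ∈ Oset F s w,
      P.rep 2 * Q.rep 0 - 2 * P.rep 1 * Q.rep 1 + P.rep 0 * Q.rep 2 ≠ 0) ∧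
    (∀ P ∈ Oset F s w, ∀ Q ∈ Oset F s w, ¬ (ER F).Adj P Q) :=
  Oset_internal_non_conjugate_general p k s hp hs hmod F hF w hw
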